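/- Let a1, c, mu0, mu1, σ > 0 and b ∈ ℝ with 0 < a1 < 2c. Set E = 4·a1³·mu1⁴·σ − 4·a1²·b·mu1³·σ − a1²·mu0²·mu1² − 4·a1²·mu0·mu1²·σ + 8·a1²·mu1²·σ + 2·a1·b·mu0·mu1 − 4·a1·b·mu1·σ − 4·a1·mu0·σ + 4·a1·σ − b², and assume E·(a1 − c) > 0. Define B = (a1·mu0·mu1 − b)/(2·a1·σ·(a1·mu1² + 1)), ω = −((a1·mu1²·σ − b·mu1 − mu0 + σ)·mu1)/(a1·mu1² + 1), λ = √(E/(16·a1·σ²·(a1 − c)·(a1·mu1² + 1)²)), d2 = 3·√(a1·(2c − a1))·E/(8·a1·σ·(a1·mu1² + 1)²·(a1 − c)), h2 = 3·E/(8·σ·(a1·mu1² + 1)²·(a1 − c)), and h0 = (−8·a1⁴·mu1⁴·σ² + 8·a1³·c·mu1⁴·σ² + 8·a1⁴·mu1⁴·σ − 8·a1²·b·c·mu1³·σ − 16·a1³·mu1²·σ² − 2·a1²·c·mu0²·mu1² − 8·a1²·c·mu0·mu1²·σ + 16·a1²·c·mu1²·σ² + 16·a1³·mu1²·σ + 4·a1·b·c·mu0·mu1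 − 8·a1·b·c·mu1·σ − 8·a1²·σ² − 8·a1·c·mu0·σ + 8·a1·c·σ² + 8·a1²·σ − 2·b²·c)/(−8·a1·σ·(a1·mu1² + 1)²·(a1 − c)). Then f(ξ) = d2·sech²(λ·ξ) and g(ξ) = h0 + h2·sech²(λ·ξ) satisfy the Schrödinger BBM–BBM associated ODE system with parameters a1, c, mu0, mu1, b, wave speed σ, and phase shifts B, ω. -/

import Mathlib

/-!
Write `S = sech² (λ ξ)`. It satisfies `S'' = λ² (4 S - 6 S²)`, hence `S''' = λ² (4 - 12 S) S'`.
For `f = d₂ S` and `g = h₀ + h₂ S`, equations (i) and (iii) therefore become `S'` times a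
polynomial of degree one in `S`, and (ii) becomes `S` times such a polynomial. The theorem
reduces to the vanishing of their coefficients: rational identities in the parameters, together
with `a₁ d₂² = (2c - a₁) h₂²`, which is where the square root in `d₂` comes from.
-/

open Real

noncomputable def sechSq (k x : ℝ) : ℝ := (1 / cosh (k * x)) ^ 2

theorem hasDerivAt_sechSq (k x : ℝ) :
    HasDerivAt (sechSq k) (-2 * k * sinh (k * x) / cosh (k * x) ^ 3) x := by
  have hcosh := (cosh_pos (k * x)).ne'
  refine (((hasDerivAt_const x 1).fun_div (hasDerivAt_const_mul k).cosh hcosh).fun_pow 2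
    ).congr_deriv ?_
  norm_num
  field_simp

theorem differentiable_sechSq (k : ℝ) : Differentiable ℝ (sechSq k) :=
  fun x => (hasDerivAt_sechSq k x).differentiableAt

theorem iteratedDeriv_two_sechSq (k : ℝ) :
    iteratedDeriv 2 (sechSq k) = fun x => k ^ 2 * (4 * sechSq k x - 6 * sechSq k x ^ 2) := by
  rw [iteratedDeriv_succ, iteratedDeriv_one, funext fun x => (hasDerivAt_sechSq k x).deriv]
  funext x
  have hcosh := (cosh_pos (k * x)).ne'
  refine (((hasDerivAt_const_mul k).sinh.const_mul (-2 * k)).fun_div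
    ((hasDerivAt_const_mul k).cosh.fun_pow 3) (pow_ne_zero 3 hcosh)).deriv.trans ?_
  simp only [sechSq]
  norm_num
  field_simp
  linear_combination (-6 * k ^ 2) * cosh_sq (k * x)

theorem iteratedDeriv_three_sechSq (k x : ℝ) :
    iteratedDeriv 3 (sechSq k) x = k ^ 2 * (4 - 12 * sechSq k x) * deriv (sechSq k) x := by
  have hS := (differentiable_sechSq k x).hasDerivAt
  rw [iteratedDeriv_succ, iteratedDeriv_two_sechSq]
  refine (((hS.const_mul 4).sub ((hS.fun_pow 2).const_mul 6)).const_mul (k ^ 2)).deriv.trans ?_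
  ring

section SechSqAnsatz

variable {k d h₀ h : ℝ} {f g : ℝ → ℝ}

theorem sechSq_ansatz_first_eq (hf : f = fun x => d * sechSq k x)
    (hg : g = fun x => h₀ + h * sechSq k x) {α K : ℝ} (hh : h = 6 * α * k ^ 2)
    (hK : h₀ + 4 * α * k ^ 2 + K = 0) (x : ℝ) :
    deriv f x * g x + f x * deriv g x + α * iteratedDeriv 3 f x + K * deriv f x = 0 := by
  subst hf hg
  simp only [deriv_const_mul_field, deriv_const_add, iteratedDeriv_const_mul_field,
    iteratedDeriv_three_sechSq]
  linear_combination (d * deriv (sechSq k) x) * hK + (2 * d * deriv (sechSq k) x * sechSq k x) * hh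

theorem sechSq_ansatz_second_eq (hf : f = fun x => d * sechSq k x)
    (hg : g = fun x => h₀ + h * sechSq k x) {β P Q : ℝ}
    (hPQ : β * h₀ + 4 * P * k ^ 2 + Q = 0) (hP : β * h = 6 * P * k ^ 2) (x : ℝ) :
    β * f x * g x + P * iteratedDeriv 2 f x + Q * f x = 0 := by
  subst hf hg
  simp only [iteratedDeriv_const_mul_field, iteratedDeriv_two_sechSq]
  linear_combination (d * sechSq k x) * hPQ + (d * sechSq k x ^ 2) * hP

theorem sechSq_ansatz_third_eq (hf : f = fun x => d * sechSq k x)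
    (hg : g = fun x => h₀ + h * sechSq k x) {γ δ : ℝ} (hδ : h₀ + 4 * γ * k ^ 2 + δ = 0)
    (hγ : d ^ 2 + h ^ 2 = 12 * γ * h * k ^ 2) (x : ℝ) :
    f x * deriv f x + g x * deriv g x + γ * iteratedDeriv 3 g x + δ * deriv g x = 0 := by
  subst hf hg
  simp only [deriv_const_mul_field, deriv_const_add, iteratedDeriv_const_add three_pos,
    iteratedDeriv_const_mul_field, iteratedDeriv_three_sechSq]
  linear_combination (h * deriv (sechSq k) x) * hδ + (sechSq k x * deriv (sechSq k) x) * hγ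

end SechSqAnsatz

theorem sq_add_sq_eq_of_eq_sqrt_div {a1 c σ ℓ d h : ℝ} (ha1 : a1 ≠ 0)
    (hX : 0 ≤ a1 * (2 * c - a1)) (hd : d = √(a1 * (2 * c - a1)) * h / a1)
    (hh : h = 6 * (a1 * σ) * ℓ) :
    d ^ 2 + h ^ 2 = 12 * (c * σ) * h * ℓ := by
  rw [hd, div_pow, mul_pow, sq_sqrt hX]
  field_simp
  rw [hh]
  ring

section SolitonCoefficients

variable (a1 c mu0 mu1 b σ : ℝ)

-- The paper's `E`, `λ²`, `B`, `ω`, `h₂` and `h₀`, in this order.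
def solitonDiscr : ℝ :=
  4*a1^3*mu1^4*σ - 4*a1^2*b*mu1^3*σ - a1^2*mu0^2*mu1^2 - 4*a1^2*mu0*mu1^2*σ + 8*a1^2*mu1^2*σ
    + 2*a1*b*mu0*mu1 - 4*a1*b*mu1*σ - 4*a1*mu0*σ + 4*a1*σ - b^2

noncomputable def solitonWaveNumberSq : ℝ :=
  solitonDiscr a1 mu0 mu1 b σ / (16*a1*σ^2*(a1 - c)*(a1*mu1^2 + 1)^2)

noncomputable def solitonPhaseB : ℝ := (a1*mu0*mu1 - b)/(2*a1*σ*(a1*mu1^2 + 1))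

noncomputable def solitonPhaseω : ℝ := -((a1*mu1^2*σ - b*mu1 - mu0 + σ)*mu1)/(a1*mu1^2 + 1)

noncomputable def solitonAmplitude : ℝ :=
  3*solitonDiscr a1 mu0 mu1 b σ/(8*σ*(a1*mu1^2 + 1)^2*(a1 - c))

noncomputable def solitonLevel : ℝ :=
  (-8*a1^4*mu1^4*σ^2 + 8*a1^3*c*mu1^4*σ^2 + 8*a1^4*mu1^4*σ - 8*a1^2*b*c*mu1^3*σ
    - 16*a1^3*mu1^2*σ^2 - 2*a1^2*c*mu0^2*mu1^2 - 8*a1^2*c*mu0*mu1^2*σ + 16*a1^2*c*mu1^2*σ^2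
    + 16*a1^3*mu1^2*σ + 4*a1*b*c*mu0*mu1 - 8*a1*b*c*mu1*σ - 8*a1^2*σ^2 - 8*a1*c*mu0*σ
    + 8*a1*c*σ^2 + 8*a1^2*σ - 2*b^2*c)/(-8*a1*σ*(a1*mu1^2 + 1)^2*(a1 - c))

variable {a1 c mu0 mu1 b σ}

theorem solitonWaveNumberSq_nonneg (ha1 : 0 ≤ a1)
    (hE : 0 < solitonDiscr a1 mu0 mu1 b σ * (a1 - c)) :
    0 ≤ solitonWaveNumberSq a1 c mu0 mu1 b σ := by
  have hEc : 0 ≤ solitonDiscr a1 mu0 mu1 b σ / (a1 - c) := by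
    rcases mul_pos_iff.mp hE with ⟨hE, hac⟩ | ⟨hE, hac⟩
    · exact div_nonneg hE.le hac.le
    · exact div_nonneg_of_nonpos hE.le hac.le
  calc 0 ≤ solitonDiscr a1 mu0 mu1 b σ / (a1 - c) / (16*a1*σ^2*(a1*mu1^2 + 1)^2) := by
        positivity
    _ = solitonWaveNumberSq a1 c mu0 mu1 b σ := by
      rw [solitonWaveNumberSq, div_div]; congr 1; ring

theorem solitonAmplitude_eq (ha1 : a1 ≠ 0) (hσ : σ ≠ 0) :
    solitonAmplitude a1 c mu0 mu1 b σ = 6 * (a1 * σ) * solitonWaveNumberSq a1 c mu0 mu1 b σ := by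
  unfold solitonAmplitude solitonWaveNumberSq
  field_simp
  ring

theorem soliton_first_eq_const_coeff (ha1 : 0 < a1) (hσ : σ ≠ 0) (hac : a1 ≠ c) {B ω : ℝ}
    (hB : B = solitonPhaseB a1 mu0 mu1 b σ) (hω : ω = solitonPhaseω a1 mu0 mu1 b σ) :
    solitonLevel a1 c mu0 mu1 b σ + 4 * (a1 * σ) * solitonWaveNumberSq a1 c mu0 mu1 b σ
      + (mu0 + 2*a1*B*ω - 3*a1*B^2*σ - σ - 2*b*B) = 0 := by
  have hD : a1*mu1^2 + 1 ≠ 0 := by positivity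
  have hac' : a1 - c ≠ 0 := sub_ne_zero.mpr hac
  subst hB hω
  unfold solitonLevel solitonWaveNumberSq solitonDiscr solitonPhaseB solitonPhaseω
  field_simp
  ring

theorem soliton_second_eq_linear_coeff (ha1 : 0 < a1) (hσ : σ ≠ 0) (hac : a1 ≠ c) {B ω : ℝ}
    (hB : B = solitonPhaseB a1 mu0 mu1 b σ) (hω : ω = solitonPhaseω a1 mu0 mu1 b σ) :
    (B + mu1) * solitonLevel a1 c mu0 mu1 b σ
      + 4 * (3*a1*B*σ + b - a1*ω) * solitonWaveNumberSq a1 c mu0 mu1 b σ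
      + (ω + B*mu0 + a1*B^2*ω - a1*B^3*σ - B*σ - b*B^2) = 0 := by
  have hD : a1*mu1^2 + 1 ≠ 0 := by positivity
  have hac' : a1 - c ≠ 0 := sub_ne_zero.mpr hac
  subst hB hω
  unfold solitonLevel solitonWaveNumberSq solitonDiscr solitonPhaseB solitonPhaseω
  field_simp
  ring

theorem soliton_second_eq_quadratic_coeff (ha1 : 0 < a1) (hσ : σ ≠ 0) (hac : a1 ≠ c)
    {B ω : ℝ}
    (hB : B = solitonPhaseB a1 mu0 mu1 b σ) (hω : ω = solitonPhaseω a1 mu0 mu1 b σ) :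
    (B + mu1) * solitonAmplitude a1 c mu0 mu1 b σ
      = 6 * (3*a1*B*σ + b - a1*ω) * solitonWaveNumberSq a1 c mu0 mu1 b σ := by
  have hD : a1*mu1^2 + 1 ≠ 0 := by positivity
  have hac' : a1 - c ≠ 0 := sub_ne_zero.mpr hac
  subst hB hω
  unfold solitonAmplitude solitonWaveNumberSq solitonDiscr solitonPhaseB solitonPhaseω
  field_simp
  ring

theorem soliton_third_eq_const_coeff (ha1 : 0 < a1) (hσ : σ ≠ 0) (hac : a1 ≠ c) :
    solitonLevel a1 c mu0 mu1 b σ + 4 * (c * σ) * solitonWaveNumberSq a1 c mu0 mu1 b σ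
      + (1 - σ) = 0 := by
  have hD : a1*mu1^2 + 1 ≠ 0 := by positivity
  have hac' : a1 - c ≠ 0 := sub_ne_zero.mpr hac
  unfold solitonLevel solitonWaveNumberSq solitonDiscr
  field_simp
  ring

end SolitonCoefficients

theorem stmt_7_general
    (a1 c mu0 mu1 b : ℝ)
    (ha1 : 0 < a1)
    (σ : ℝ) (hσ : 0 < σ) (ha1lt : a1 < 2*c)
    (E : ℝ) (hE : E = 4*a1^3*mu1^4*σ - 4*a1^2*b*mu1^3*σ - a1^2*mu0^2*mu1^2 - 4*a1^2*mu0*mu1^2*σ + 8*a1^2*mu1^2*σ + 2*a1*b*mu0*mu1 - 4*a1*b*mu1*σ - 4*a1*mu0*σ + 4*a1*σ - b^2) (hEsgn : E * (a1 - c) > 0)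
    (B ω lam d2 h2 h0 : ℝ)
    (h_B : B = (a1*mu0*mu1 - b)/(2*a1*σ*(a1*mu1^2 + 1)))
    (h_ω : ω = -((a1*mu1^2*σ - b*mu1 - mu0 + σ)*mu1)/(a1*mu1^2 + 1))
    (h_lam : lam = Real.sqrt (E/(16*a1*σ^2*(a1 - c)*(a1*mu1^2 + 1)^2)))
    (h_d2 : d2 = 3*Real.sqrt (a1*(2*c - a1))*E/(8*a1*σ*(a1*mu1^2 + 1)^2*(a1 - c)))
    (h_h2 : h2 = 3*E/(8*σ*(a1*mu1^2 + 1)^2*(a1 - c)))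
    (h_h0 : h0 = (-8*a1^4*mu1^4*σ^2 + 8*a1^3*c*mu1^4*σ^2 + 8*a1^4*mu1^4*σ - 8*a1^2*b*c*mu1^3*σ - 16*a1^3*mu1^2*σ^2 - 2*a1^2*c*mu0^2*mu1^2 - 8*a1^2*c*mu0*mu1^2*σ + 16*a1^2*c*mu1^2*σ^2 + 16*a1^3*mu1^2*σ + 4*a1*b*c*mu0*mu1 - 8*a1*b*c*mu1*σ - 8*a1^2*σ^2 - 8*a1*c*mu0*σ + 8*a1*c*σ^2 + 8*a1^2*σ - 2*b^2*c)/(-8*a1*σ*(a1*mu1^2 + 1)^2*(a1 - c)))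
    (f g : ℝ → ℝ)
    (hfdef : ∀ ξ : ℝ, f ξ = d2 * (1/Real.cosh (lam*ξ))^2)
    (hgdef : ∀ ξ : ℝ, g ξ = h0 + h2 * (1/Real.cosh (lam*ξ))^2) :
    ∀ ξ : ℝ,
      (deriv f ξ * g ξ + f ξ * deriv g ξ + a1*σ * iteratedDeriv 3 f ξ + (mu0 + 2*a1*B*ω - 3*a1*B^2*σ - σ - 2*b*B) * deriv f ξ = 0) ∧
      ((B + mu1) * f ξ * g ξ + (3*a1*B*σ + b - a1*ω) * iteratedDeriv 2 f ξ + (ω + B*mu0 + a1*B^2*ω - a1*B^3*σ - B*σ - b*B^2) * f ξ = 0) ∧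
      (f ξ * deriv f ξ + g ξ * deriv g ξ + (c*σ) * iteratedDeriv 3 g ξ + (1 - σ) * deriv g ξ = 0) := by
  have hac : a1 ≠ c := by rintro rfl; simp at hEsgn
  have hd2 : d2 = √(a1 * (2 * c - a1)) * h2 / a1 := by
    rw [h_d2, h_h2]
    field_simp
  obtain rfl : E = solitonDiscr a1 mu0 mu1 b σ := hE
  obtain rfl : h2 = solitonAmplitude a1 c mu0 mu1 b σ := h_h2
  obtain rfl : h0 = solitonLevel a1 c mu0 mu1 b σ := h_h0
  have hlam : lam ^ 2 = solitonWaveNumberSq a1 c mu0 mu1 b σ :=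
    h_lam ▸ sq_sqrt (solitonWaveNumberSq_nonneg ha1.le hEsgn)
  have hh2 : solitonAmplitude a1 c mu0 mu1 b σ = 6 * (a1 * σ) * lam ^ 2 :=
    hlam ▸ solitonAmplitude_eq ha1.ne' hσ.ne'
  have hf : f = fun x => d2 * sechSq lam x := funext hfdef
  have hg : g = fun x =>
      solitonLevel a1 c mu0 mu1 b σ + solitonAmplitude a1 c mu0 mu1 b σ * sechSq lam x :=
    funext hgdef
  intro ξ
  refine ⟨sechSq_ansatz_first_eq hf hg hh2 ?_ ξ, sechSq_ansatz_second_eq hf hg ?_ ?_ ξ,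
    sechSq_ansatz_third_eq hf hg ?_ ?_ ξ⟩ <;> rw [hlam]
  · exact soliton_first_eq_const_coeff ha1 hσ.ne' hac h_B h_ω
  · exact soliton_second_eq_linear_coeff ha1 hσ.ne' hac h_B h_ω
  · exact soliton_second_eq_quadratic_coeff ha1 hσ.ne' hac h_B h_ω
  · exact soliton_third_eq_const_coeff ha1 hσ.ne' hac
  · exact hlam ▸ sq_add_sq_eq_of_eq_sqrt_div ha1.ne' (mul_nonneg ha1.le (by linarith)) hd2 hh2

theorem stmt_7
    (a1 c mu0 mu1 b : ℝ)
    (ha1 : 0 < a1) (hc : 0 < c) (hmu0 : 0 < mu0) (hmu1 : 0 < mu1)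
    (σ : ℝ) (hσ : 0 < σ) (ha1lt : a1 < 2*c)
    (E : ℝ) (hE : E = 4*a1^3*mu1^4*σ - 4*a1^2*b*mu1^3*σ - a1^2*mu0^2*mu1^2 - 4*a1^2*mu0*mu1^2*σ + 8*a1^2*mu1^2*σ + 2*a1*b*mu0*mu1 - 4*a1*b*mu1*σ - 4*a1*mu0*σ + 4*a1*σ - b^2) (hEsgn : E * (a1 - c) > 0)
    (B ω lam d2 h2 h0 : ℝ)
    (h_B : B = (a1*mu0*mu1 - b)/(2*a1*σ*(a1*mu1^2 + 1)))
    (h_ω : ω = -((a1*mu1^2*σ - b*mu1 - mu0 + σ)*mu1)/(a1*mu1^2 + 1))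
    (h_lam : lam = Real.sqrt (E/(16*a1*σ^2*(a1 - c)*(a1*mu1^2 + 1)^2)))
    (h_d2 : d2 = 3*Real.sqrt (a1*(2*c - a1))*E/(8*a1*σ*(a1*mu1^2 + 1)^2*(a1 - c)))
    (h_h2 : h2 = 3*E/(8*σ*(a1*mu1^2 + 1)^2*(a1 - c)))
    (h_h0 : h0 = (-8*a1^4*mu1^4*σ^2 + 8*a1^3*c*mu1^4*σ^2 + 8*a1^4*mu1^4*σ - 8*a1^2*b*c*mu1^3*σ - 16*a1^3*mu1^2*σ^2 - 2*a1^2*c*mu0^2*mu1^2 - 8*a1^2*c*mu0*mu1^2*σ + 16*a1^2*c*mu1^2*σ^2 + 16*a1^3*mu1^2*σ + 4*a1*b*c*mu0*mu1 - 8*a1*b*c*mu1*σ - 8*a1^2*σ^2 - 8*a1*c*mu0*σ + 8*a1*c*σ^2 + 8*a1^2*σ - 2*b^2*c)/(-8*a1*σ*(a1*mu1^2 + 1)^2*(a1 - c)))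
    (f g : ℝ → ℝ)
    (hfdef : ∀ ξ : ℝ, f ξ = d2 * (1/Real.cosh (lam*ξ))^2)
    (hgdef : ∀ ξ : ℝ, g ξ = h0 + h2 * (1/Real.cosh (lam*ξ))^2) :
    ∀ ξ : ℝ,
      (deriv f ξ * g ξ + f ξ * deriv g ξ + a1*σ * iteratedDeriv 3 f ξ + (mu0 + 2*a1*B*ω - 3*a1*B^2*σ - σ - 2*b*B) * deriv f ξ = 0) ∧
      ((B + mu1) * f ξ * g ξ + (3*a1*B*σ + b - a1*ω) * iteratedDeriv 2 f ξ + (ω + B*mu0 + a1*B^2*ω - a1*B^3*σ - B*σ - b*B^2) * f ξ = 0) ∧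
      (f ξ * deriv f ξ + g ξ * deriv g ξ + (c*σ) * iteratedDeriv 3 g ξ + (1 - σ) * deriv g ξ = 0) :=
  stmt_7_general a1 c mu0 mu1 b ha1 σ hσ ha1lt E hE hEsgn B ω lam d2 h2 h0 h_B h_ω h_lam h_d2 h_h2
    h_h0 f g hfdef hgdef
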